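/- Let D* be a minimal strongly connected digraph of order n ≥ 3 and v a linear vertex whose unique in-neighbor equals its unique out-neighbor (i.e., there is u with (u,v) and (v,u) the only arcs incident to v). Then D* − v is minimal strongly connected. -/

import Mathlib

/-- Reachability in a digraph given by its arc set `A`. -/
def Reach {α : Type*} (A : Finset (α × α)) (u v : α) : Prop :=
  Relation.ReflTransGen (fun a b => (a, b) ∈ A) u v

/-- A digraph with vertex set `V` and arc set `A` is strongly connected if
every vertex reaches every other vertex by a directed path. -/
def StrongConn {α : Type*} (V : Finset α) (A : Finset (α × α)) : Prop :=
  ∀ u ∈ V, ∀ v ∈ V, Reach A u v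

/-- Minimal strongly connected: strongly connected and removing any arc
destroys strong connectivity. -/
def MSC {α : Type*} [DecidableEq α] (V : Finset α) (A : Finset (α × α)) : Prop :=
  StrongConn V A ∧ ∀ a ∈ A, ¬ StrongConn V (A.erase a)

/-- `l` is a directed (simple) path from `u` to `v` in the digraph with arc set `A`. -/
def IsPath {α : Type*} (A : Finset (α × α)) (u v : α) (l : List α) : Prop :=
  l.Chain' (fun a b => (a, b) ∈ A) ∧ l.head? = some u ∧ l.getLast? = some v ∧ l.Nodup

/-- `(u,v)` is a transitive arc: it is an arc and there is a directed path from
`u` to `v` distinct from the single arc `(u,v)`. -/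
def TransArc {α : Type*} (A : Finset (α × α)) (u v : α) : Prop :=
  (u, v) ∈ A ∧ ∃ l, IsPath A u v l ∧ l ≠ [u, v]

/-- `l` (a list of distinct vertices, of length ≥ 2) is a directed cycle:
consecutive vertices are joined by arcs, and there is an arc from the last
vertex back to the first. -/
def IsCycle {α : Type*} (A : Finset (α × α)) (l : List α) : Prop :=
  ∃ h : l ≠ [], l.Nodup ∧ 2 ≤ l.length ∧
    List.Chain (fun a b => (a, b) ∈ A) (l.getLast h) l

/-- Well-formedness: nonempty vertex set, arcs join vertices of `V`, no loops. -/
def GoodDigraph {α : Type*} (V : Finset α) (A : Finset (α × α)) : Prop :=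
  V.Nonempty ∧ ∀ a ∈ A, a.1 ∈ V ∧ a.2 ∈ V ∧ a.1 ≠ a.2

/-- Outdegree of a vertex. -/
def outdeg {α : Type*} [DecidableEq α] (A : Finset (α × α)) (v : α) : ℕ :=
  (A.filter (fun a => a.1 = v)).card

/-- Indegree of a vertex. -/
def indeg {α : Type*} [DecidableEq α] (A : Finset (α × α)) (v : α) : ℕ :=
  (A.filter (fun a => a.2 = v)).card

/-- A linear vertex has indegree and outdegree equal to 1. -/
def LinearVertex {α : Type*} [DecidableEq α] (A : Finset (α × α)) (v : α) : Prop :=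
  indeg A v = 1 ∧ outdeg A v = 1

/-- The digraph is a directed `n`-cycle: its vertices can be listed
`v₁, …, vₙ` so that the arcs are exactly `(v₁,v₂), …, (vₙ,v₁)`. -/
def IsCycleDigraph {α : Type*} [DecidableEq α] (V : Finset α) (A : Finset (α × α)) : Prop :=
  ∃ l : List α, l.Nodup ∧ 2 ≤ l.length ∧ l.toFinset = V ∧ A = (l.zip (l.rotate 1)).toFinset

/-- A directed tree: every arc is accompanied by its reverse, and the
underlying undirected graph (on the vertex set `V`) is a tree. -/
def IsDirTree {α : Type*} [DecidableEq α] (V : Finset α) (A : Finset (α × α)) : Prop :=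
  (∀ u v : α, (u, v) ∈ A → (v, u) ∈ A) ∧
  (SimpleGraph.fromRel (fun a b : {x // x ∈ V} => ((a : α), (b : α)) ∈ A)).IsTree

/-- `(V', A')` is the (internal or external) expansion of `(V, A)` by the new
vertex `v`.  Internal: an arc `(u,w)` is replaced by `(u,v)` and `(v,w)`.
External: the arcs `(u,v)` and `(v,w)` are added for vertices `u, w ∈ V`. -/
def IsExpansionBy {α : Type*} [DecidableEq α] (v : α) (V : Finset α) (A : Finset (α × α))
    (V' : Finset α) (A' : Finset (α × α)) : Prop :=
  v ∉ V ∧ V' = insert v V ∧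
    ((∃ u w, (u, w) ∈ A ∧ A' = insert (u, v) (insert (v, w) (A.erase (u, w)))) ∨
     (∃ u ∈ V, ∃ w ∈ V, A' = insert (u, v) (insert (v, w) A)))

/-
A walk of `D*` between vertices other than `v` can only enter `v` from `u` and leave it back
to `u`, so collapsing `v` onto `u` turns it into a walk of `D* - v`: hence `D* - v` is strongly
connected. Conversely, if an arc `a` of `D* - v` could be removed from `D* - v` keeping strong
connectivity, then re-attaching `v` through the 2-cycle `u → v → u` would show that `a` can be
removed from `D*`.
-/

open Finset Relation

section

variable {α : Type*}

lemma Reach.mono {A B : Finset (α × α)} (hAB : A ⊆ B) {x y : α} (h : Reach A x y) :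
    Reach B x y :=
  ReflTransGen.mono (fun _ _ hab => hAB hab) _ _ h

lemma Reach.filter_of_pendant [DecidableEq α] {A : Finset (α × α)} {u v : α} (huv : u ≠ v)
    (hin : ∀ x, (x, v) ∈ A → x = u) (hout : ∀ x, (v, x) ∈ A → x = u)
    {x y : α} (hx : x ≠ v) (hy : y ≠ v) (h : Reach A x y) :
    Reach (A.filter (fun a => a.1 ≠ v ∧ a.2 ≠ v)) x y := by
  let collapse : α → α := fun z => if z = v then u else z
  have collapse_of_ne : ∀ z, z ≠ v → collapse z = z := fun z hz => if_neg hz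
  have collapse_self : collapse v = u := if_pos rfl
  have arc : ∀ a b, (a, b) ∈ A →
      Reach (A.filter (fun a => a.1 ≠ v ∧ a.2 ≠ v)) (collapse a) (collapse b) := by
    intro a b hab
    by_cases ha : a = v
    · subst ha
      rw [hout b hab, collapse_self, collapse_of_ne u huv]
      exact ReflTransGen.refl
    by_cases hb : b = v
    · subst hb
      rw [hin a hab, collapse_self, collapse_of_ne u huv]
      exact ReflTransGen.refl
    rw [collapse_of_ne a ha, collapse_of_ne b hb]
    exact ReflTransGen.single (mem_filter.2 ⟨hab, ha, hb⟩)
  simpa only [Reach, Function.onFun, collapse_of_ne x hx, collapse_of_ne y hy] using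
    ReflTransGen.lift' collapse arc _ _ h

lemma StrongConn.insert_of_twoCycle [DecidableEq α] {V : Finset α} {A B : Finset (α × α)}
    (h : StrongConn V A) (hAB : A ⊆ B) {u v : α} (hu : u ∈ V)
    (huv : (u, v) ∈ B) (hvu : (v, u) ∈ B) : StrongConn (insert v V) B := by
  have to_u : ∀ x ∈ insert v V, Reach B x u := by
    intro x hx
    rcases mem_insert.1 hx with rfl | hx
    · exact ReflTransGen.single hvu
    · exact (h x hx u hu).mono hAB
  have from_u : ∀ y ∈ insert v V, Reach B u y := by
    intro y hy
    rcases mem_insert.1 hy with rfl | hy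
    · exact ReflTransGen.single huv
    · exact (h u hu y hy).mono hAB
  exact fun x hx y hy => (to_u x hx).trans (from_u y hy)

end

theorem stmt_16_general {α : Type*} [DecidableEq α] (V : Finset α) (A : Finset (α × α))
    (hg : GoodDigraph V A) (h : MSC V A) (v u : α)
    (huv : (u, v) ∈ A) (hvu : (v, u) ∈ A)
    (hin : ∀ x, (x, v) ∈ A → x = u) (hout : ∀ x, (v, x) ∈ A → x = u) :
    MSC (V.erase v) (A.filter (fun a => a.1 ≠ v ∧ a.2 ≠ v)) := by
  obtain ⟨huV, hvV, hne⟩ := hg.2 _ huv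
  refine ⟨fun x hx y hy => ?_, fun a ha hsc => h.2 a (mem_filter.1 ha).1 ?_⟩
  · rw [mem_erase] at hx hy
    exact (h.1 x hx.2 y hy.2).filter_of_pendant hne hin hout hx.1 hy.1
  · obtain ⟨-, hav⟩ := mem_filter.1 ha
    have huv' : (u, v) ∈ A.erase a := mem_erase.2 ⟨fun hua => hav.2 (by rw [← hua]), huv⟩
    have hvu' : (v, u) ∈ A.erase a := mem_erase.2 ⟨fun hva => hav.1 (by rw [← hva]), hvu⟩
    rw [← insert_erase hvV]
    exact hsc.insert_of_twoCycle (erase_subset_erase a (filter_subset _ A))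
      (mem_erase.2 ⟨hne, huV⟩) huv' hvu'

/-- if `v` is a linear vertex of an MSC digraph of order `n ≥ 3`
whose unique in-neighbor equals its unique out-neighbor `u`, then deleting `v`
and its incident arcs yields an MSC digraph. -/
theorem stmt_16 {α : Type*} [DecidableEq α] (V : Finset α) (A : Finset (α × α))
    (hg : GoodDigraph V A) (h : MSC V A) (hn : 3 ≤ V.card) (v u : α)
    (huv : (u, v) ∈ A) (hvu : (v, u) ∈ A)
    (hin : ∀ x, (x, v) ∈ A → x = u) (hout : ∀ x, (v, x) ∈ A → x = u) :
    MSC (V.erase v) (A.filter (fun a => a.1 ≠ v ∧ a.2 ≠ v)) :=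
  stmt_16_general V A hg h v u huv hvu hin hout
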